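/- Let Γ be an admissible Galois structure on a finitely complete category C. Let R and S be internal categories in C whose source and target morphisms d and c are trivial coverings, let f, g : R → S be internal functors, and let μ : R₀ → S₁ be an internal natural transformation from f to g. Then I(R) and I(S) are internal categories in X, I(f) and I(g) are internal functors I(R) → I(S), and I(μ) : I(R₀) → I(S₁) is an internal natural transformation from I(f) to I(g); in particular, if f and g are naturally isomorphic then so are I(f) and I(g). -/

import Mathlib

open CategoryTheory CategoryTheory.Limits

universe v₁ v₂ u₁ u₂

namespace GaloisPaper

/-- A Galois structure `Γ = (C, X, H, I, η, ε, E, F)`. -/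
structure GaloisStructure (C : Type u₁) [Category.{v₁} C] (X : Type u₂) [Category.{v₂} X] where
  I : C ⥤ X
  H : X ⥤ C
  adj : I ⊣ H
  fib : MorphismProperty C
  fibX : MorphismProperty X
  fib_of_iso : ∀ {A B : C} (f : A ⟶ B), IsIso f → fib f
  fibX_of_iso : ∀ {A B : X} (f : A ⟶ B), IsIso f → fibX f
  fib_pullback : ∀ {A B Z : C} (f : A ⟶ B) (g : Z ⟶ B), fib f →
    ∃ (P : C) (p₁ : P ⟶ A) (p₂ : P ⟶ Z), IsPullback p₁ p₂ f g ∧ fib p₂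
  fibX_pullback : ∀ {A B Z : X} (f : A ⟶ B) (g : Z ⟶ B), fibX f →
    ∃ (P : X) (p₁ : P ⟶ A) (p₂ : P ⟶ Z), IsPullback p₁ p₂ f g ∧ fibX p₂
  fib_comp : ∀ {A B Z : C} (f : A ⟶ B) (g : B ⟶ Z), fib f → fib g → fib (f ≫ g)
  fibX_comp : ∀ {A B Z : X} (f : A ⟶ B) (g : B ⟶ Z), fibX f → fibX g → fibX (f ≫ g)
  H_fib : ∀ {A B : X} (f : A ⟶ B), fibX f → fib (H.map f)
  I_fib : ∀ {A B : C} (f : A ⟶ B), fib f → fibX (I.map f)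

namespace GaloisStructure

variable {C : Type u₁} [Category.{v₁} C] {X : Type u₂} [Category.{v₂} X]
variable (Γ : GaloisStructure C X)

/-- A trivial covering: a fibration whose `η`-naturality square is a pullback. -/
def TrivialCovering {A B : C} (f : A ⟶ B) : Prop :=
  Γ.fib f ∧ IsPullback (Γ.adj.unit.app A) f ((Γ.I ⋙ Γ.H).map f) (Γ.adj.unit.app B)

/-- The full subcategory `(E ↓ B)` of the slice category over `B` given by fibrations. -/
abbrev SliceFib (B : C) := ObjectProperty.FullSubcategory (fun f : Over B => Γ.fib f.hom)

/-- The full subcategory `(F ↓ Y)` of the slice category over `Y : X` given by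
morphisms of the class `F`. -/
abbrev SliceFibX (Y : X) := ObjectProperty.FullSubcategory (fun f : Over Y => Γ.fibX f.hom)

/-- Composition with a fibration `p : E ⟶ B`, as a functor `(E ↓ E) ⥤ (E ↓ B)`;
the pullback functor `p*` is its right adjoint. -/
def compAlong {E B : C} (p : E ⟶ B) (hp : Γ.fib p) : Γ.SliceFib E ⥤ Γ.SliceFib B :=
  ObjectProperty.lift _ (ObjectProperty.ι _ ⋙ Over.map p)
    (fun f => Γ.fib_comp _ _ f.property hp)

/-- A monadic extension: a fibration `p` whose pullback functor
`p* : (E ↓ B) ⥤ (E ↓ E)` (i.e. the right adjoint of composition with `p`) is monadic. -/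
def MonadicExtension {E B : C} (p : E ⟶ B) : Prop :=
  ∃ hp : Γ.fib p, ∃ pstar : Γ.SliceFib B ⥤ Γ.SliceFib E,
    Nonempty (Γ.compAlong p hp ⊣ pstar) ∧ Nonempty (MonadicRightAdjoint pstar)

/-- A covering (central extension): a fibration whose pullback along some monadic
extension is a trivial covering. -/
def Covering {A B : C} (f : A ⟶ B) : Prop :=
  Γ.fib f ∧ ∃ (E : C) (p : E ⟶ B), Γ.MonadicExtension p ∧
    ∃ (P : C) (q : P ⟶ A) (r : P ⟶ E), IsPullback q r f p ∧ Γ.TrivialCovering r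

/-- A normal extension: a monadic extension whose kernel pair projections are
trivial coverings. -/
def NormalExtension {E B : C} (p : E ⟶ B) : Prop :=
  Γ.MonadicExtension p ∧ ∃ (R : C) (d c : R ⟶ E), IsPullback d c p p ∧
    Γ.TrivialCovering d ∧ Γ.TrivialCovering c

/-- The restriction `I^B : (E ↓ B) ⥤ (F ↓ I B)` of the reflection `I`. -/
def restrictI (B : C) : Γ.SliceFib B ⥤ Γ.SliceFibX (Γ.I.obj B) :=
  ObjectProperty.lift _ (ObjectProperty.ι _ ⋙ Over.post Γ.I)
    (fun f => Γ.I_fib _ f.property)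

/-- Admissibility of a Galois structure: each `H^B`, i.e. each right adjoint of
`I^B : (E ↓ B) ⥤ (F ↓ I B)`, is full and faithful. -/
def Admissible : Prop :=
  ∀ B : C, ∃ (HB : Γ.SliceFibX (Γ.I.obj B) ⥤ Γ.SliceFib B) (_ : Γ.restrictI B ⊣ HB),
    HB.Full ∧ HB.Faithful

/-- Pullback-stability of monadic extensions: the pullback of a monadic extension
along any morphism exists and is again a monadic extension. -/
def MonStable : Prop :=
  ∀ {E B Z : C} (p : E ⟶ B) (g : Z ⟶ B), Γ.MonadicExtension p →
    ∃ (P : C) (q : P ⟶ E) (r : P ⟶ Z), IsPullback q r p g ∧ Γ.MonadicExtension r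

/-- A weakly universal normal extension of `B`. -/
def WeaklyUniversal {U B : C} (u : U ⟶ B) : Prop :=
  Γ.NormalExtension u ∧ ∀ {E : C} (p : E ⟶ B), Γ.NormalExtension p → ∃ e : U ⟶ E, e ≫ p = u

/-- The category `NExt_Γ(C)` of normal extensions, a full subcategory of the arrow
category of `C`. -/
abbrev NExtCat := ObjectProperty.FullSubcategory (fun f : Arrow C => Γ.NormalExtension f.hom)

/-- The category `Ext_Γ(C)` of monadic extensions, a full subcategory of the arrow
category of `C`. -/
abbrev ExtCat := ObjectProperty.FullSubcategory (fun f : Arrow C => Γ.MonadicExtension f.hom)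

/-- The codomain functor `NExt_Γ(C) ⥤ C`. -/
def codF : Γ.NExtCat ⥤ C := ObjectProperty.ι _ ⋙ Arrow.rightFunc

/-- The codomain functor `Ext_Γ(C) ⥤ C`. -/
def codExt : Γ.ExtCat ⥤ C := ObjectProperty.ι _ ⋙ Arrow.rightFunc

/-- The inclusion `NExt_Γ(C) ⥤ Ext_Γ(C)`: every normal extension is monadic. -/
def inclNExt : Γ.NExtCat ⥤ Γ.ExtCat :=
  ObjectProperty.lift _ (ObjectProperty.ι _) (fun p => p.property.1)

end GaloisStructure


variable {C : Type u₁} [Category.{v₁} C]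

/-- An internal category in a category `C`, with a chosen pullback of composable pairs
(and of composable triples, used to state associativity). -/
structure InternalCat (C : Type u₁) [Category.{v₁} C] where
  base : C
  arr : C
  d : arr ⟶ base
  c : arr ⟶ base
  e : base ⟶ arr
  pairs : C
  p₁ : pairs ⟶ arr
  p₂ : pairs ⟶ arr
  isPullback : IsPullback p₁ p₂ c d
  m : pairs ⟶ arr
  d_e : e ≫ d = 𝟙 base
  c_e : e ≫ c = 𝟙 base
  m_d : m ≫ d = p₁ ≫ d
  m_c : m ≫ c = p₂ ≫ c
  unit_right : isPullback.lift (𝟙 arr) (c ≫ e)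
    (by rw [Category.id_comp, Category.assoc, d_e, Category.comp_id]) ≫ m = 𝟙 arr
  unit_left : isPullback.lift (d ≫ e) (𝟙 arr)
    (by rw [Category.id_comp, Category.assoc, c_e, Category.comp_id]) ≫ m = 𝟙 arr
  triples : C
  t₁ : triples ⟶ pairs
  t₂ : triples ⟶ arr
  isPullback₃ : IsPullback t₁ t₂ (p₂ ≫ c) d
  assoc : isPullback.lift (t₁ ≫ m) t₂
        (by rw [Category.assoc, m_c]; exact isPullback₃.w) ≫ m =
      isPullback.lift (t₁ ≫ p₁)
        (isPullback.lift (t₁ ≫ p₂) t₂ (by rw [Category.assoc]; exact isPullback₃.w) ≫ m)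
        (by
          rw [Category.assoc, isPullback.w, Category.assoc, m_d, ← Category.assoc,
            ← Category.assoc, IsPullback.lift_fst]) ≫ m

/-- An internal functor between internal categories in `C`. -/
structure InternalFunctor (R S : InternalCat C) where
  f₀ : R.base ⟶ S.base
  f₁ : R.arr ⟶ S.arr
  w_d : f₁ ≫ S.d = R.d ≫ f₀
  w_c : f₁ ≫ S.c = R.c ≫ f₀
  w_e : R.e ≫ f₁ = f₀ ≫ S.e
  w_m : R.m ≫ f₁ =
    S.isPullback.lift (R.p₁ ≫ f₁) (R.p₂ ≫ f₁)
      (by rw [Category.assoc, Category.assoc, w_c, w_d, ← Category.assoc, ← Category.assoc,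
        R.isPullback.w]) ≫ S.m

/-- An internal natural transformation between internal functors. -/
structure InternalNatTrans {R S : InternalCat C} (F G : InternalFunctor R S) where
  μ : R.base ⟶ S.arr
  w_d : μ ≫ S.d = F.f₀
  w_c : μ ≫ S.c = G.f₀
  natural :
    S.isPullback.lift F.f₁ (R.c ≫ μ)
        (by rw [F.w_c, Category.assoc, w_d]) ≫ S.m =
      S.isPullback.lift (R.d ≫ μ) G.f₁
        (by rw [Category.assoc, w_c, G.w_d]) ≫ S.m

/-- An internal natural transformation `μ : F ⟶ G` is an internal natural isomorphism
when there is an internal natural transformation `ν : G ⟶ F` such that both composites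
(computed with the internal composition of `S`) are the identity transformations
`e ∘ f₀` and `e ∘ g₀`. -/
def InternalNatTrans.IsNatIso {R S : InternalCat C} {F G : InternalFunctor R S}
    (μ : InternalNatTrans F G) : Prop :=
  ∃ ν : InternalNatTrans G F,
    S.isPullback.lift μ.μ ν.μ (by rw [μ.w_c, ν.w_d]) ≫ S.m = F.f₀ ≫ S.e ∧
    S.isPullback.lift ν.μ μ.μ (by rw [ν.w_c, μ.w_d]) ≫ S.m = G.f₀ ≫ S.e


/-!
A trivial covering `f : A ⟶ B` is the pullback of `HI f` along `η_B`. So if `f` and `g` are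
trivial coverings over `B` with pullback `P`, then, as `H` preserves pullbacks, `P` is the
pullback of `H w` along `η_B`, where `w : I A ×_{I B} I Z ⟶ I B`; that is, `P = H^B w`.
Admissibility makes the counit `I^B H^B w ⟶ w` invertible, so `I` preserves this pullback,
and it follows that trivial coverings are stable under pullback along trivial coverings.
Hence `I` preserves the pullbacks of composable pairs and triples in `R` and `S`, and any
functor preserving those two pullbacks carries internal categories, internal functors and
internal natural transformations (and isomorphisms) to the same structures.
-/

section InternalMap

variable {D : Type u₂} [Category.{v₂} D] (F : C ⥤ D)

/-- Stated for arbitrary `u' = F.map u`, `v' = F.map v`, so that it also rewrites lifts whose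
components are composites `F.map a ≫ F.map b`. -/
lemma map_isPullback_lift {P A Z B : C} {f : A ⟶ B} {g : Z ⟶ B} {p₁ : P ⟶ A} {p₂ : P ⟶ Z}
    (h : IsPullback p₁ p₂ f g) (h' : IsPullback (F.map p₁) (F.map p₂) (F.map f) (F.map g))
    {W : C} {u : W ⟶ A} {v : W ⟶ Z} (hw : u ≫ f = v ≫ g)
    {u' : F.obj W ⟶ F.obj A} {v' : F.obj W ⟶ F.obj Z} (hu : u' = F.map u) (hv : v' = F.map v) :
    F.map (h.lift u v hw) = h'.lift u' v' (by rw [hu, hv, ← F.map_comp, ← F.map_comp, hw]) := by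
  apply h'.hom_ext
  · rw [h'.lift_fst, ← F.map_comp, h.lift_fst, hu]
  · rw [h'.lift_snd, ← F.map_comp, h.lift_snd, hv]

abbrev InternalCat.map (R : InternalCat C)
    (h : IsPullback (F.map R.p₁) (F.map R.p₂) (F.map R.c) (F.map R.d))
    (h₃ : IsPullback (F.map R.t₁) (F.map R.t₂) (F.map (R.p₂ ≫ R.c)) (F.map R.d)) :
    InternalCat D where
  base := F.obj R.base
  arr := F.obj R.arr
  d := F.map R.d
  c := F.map R.c
  e := F.map R.e
  pairs := F.obj R.pairs
  p₁ := F.map R.p₁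
  p₂ := F.map R.p₂
  isPullback := h
  m := F.map R.m
  d_e := by rw [← F.map_comp, R.d_e, F.map_id]
  c_e := by rw [← F.map_comp, R.c_e, F.map_id]
  m_d := by rw [← F.map_comp, ← F.map_comp, R.m_d]
  m_c := by rw [← F.map_comp, ← F.map_comp, R.m_c]
  unit_right := by
    rw [← map_isPullback_lift F R.isPullback h (by simp [R.d_e]) (F.map_id _).symm
      (F.map_comp _ _).symm, ← F.map_comp, R.unit_right, F.map_id]
  unit_left := by
    rw [← map_isPullback_lift F R.isPullback h (by simp [R.c_e]) (F.map_comp _ _).symm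
      (F.map_id _).symm, ← F.map_comp, R.unit_left, F.map_id]
  triples := F.obj R.triples
  t₁ := F.map R.t₁
  t₂ := F.map R.t₂
  isPullback₃ := by rwa [← F.map_comp]
  assoc := by
    have hw : (R.t₁ ≫ R.p₂) ≫ R.c = R.t₂ ≫ R.d := by rw [Category.assoc]; exact R.isPullback₃.w
    have hv : h.lift (F.map R.t₁ ≫ F.map R.p₂) (F.map R.t₂)
        (by rw [← F.map_comp, ← F.map_comp, ← F.map_comp, hw]) ≫ F.map R.m =
        F.map (R.isPullback.lift (R.t₁ ≫ R.p₂) R.t₂ hw ≫ R.m) := by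
      rw [F.map_comp _ R.m, ← map_isPullback_lift F R.isPullback h hw (F.map_comp _ _).symm rfl]
    rw [← map_isPullback_lift F R.isPullback h _ (F.map_comp _ _).symm hv,
      ← map_isPullback_lift F R.isPullback h
        (by rw [Category.assoc, R.m_c]; exact R.isPullback₃.w) (F.map_comp _ _).symm rfl,
      ← F.map_comp, ← F.map_comp, R.assoc]

section

variable {R S : InternalCat C}
  (hR : IsPullback (F.map R.p₁) (F.map R.p₂) (F.map R.c) (F.map R.d))
  (hR₃ : IsPullback (F.map R.t₁) (F.map R.t₂) (F.map (R.p₂ ≫ R.c)) (F.map R.d))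
  (hS : IsPullback (F.map S.p₁) (F.map S.p₂) (F.map S.c) (F.map S.d))
  (hS₃ : IsPullback (F.map S.t₁) (F.map S.t₂) (F.map (S.p₂ ≫ S.c)) (F.map S.d))

abbrev InternalFunctor.map (G : InternalFunctor R S) :
    InternalFunctor (R.map F hR hR₃) (S.map F hS hS₃) where
  f₀ := F.map G.f₀
  f₁ := F.map G.f₁
  w_d := by simpa using F.congr_map G.w_d
  w_c := by simpa using F.congr_map G.w_c
  w_e := by simpa using F.congr_map G.w_e
  w_m := by
    simpa [map_isPullback_lift F S.isPullback hS _ (F.map_comp _ _).symm (F.map_comp _ _).symm]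
      using F.congr_map G.w_m

abbrev InternalNatTrans.map {G K : InternalFunctor R S} (μ : InternalNatTrans G K) :
    InternalNatTrans (G.map F hR hR₃ hS hS₃) (K.map F hR hR₃ hS hS₃) where
  μ := F.map μ.μ
  w_d := by simpa using F.congr_map μ.w_d
  w_c := by simpa using F.congr_map μ.w_c
  natural := by
    simpa [map_isPullback_lift F S.isPullback hS _ rfl (F.map_comp _ _).symm,
      map_isPullback_lift F S.isPullback hS _ (F.map_comp _ _).symm rfl]
      using F.congr_map μ.natural

lemma InternalNatTrans.IsNatIso.map {G K : InternalFunctor R S} {μ : InternalNatTrans G K}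
    (hμ : μ.IsNatIso) : (μ.map F hR hR₃ hS hS₃).IsNatIso := by
  obtain ⟨ν, hμν, hνμ⟩ := hμ
  refine ⟨ν.map F hR hR₃ hS hS₃, ?_, ?_⟩
  · simpa [map_isPullback_lift F S.isPullback hS _ rfl rfl] using F.congr_map hμν
  · simpa [map_isPullback_lift F S.isPullback hS _ rfl rfl] using F.congr_map hνμ

end

end InternalMap

namespace GaloisStructure

variable {X : Type u₂} [Category.{v₂} X] (Γ : GaloisStructure C X)

lemma fib_of_isPullback {P A Z B : C} {f : A ⟶ B} {g : Z ⟶ B} {q : P ⟶ A} {r : P ⟶ Z}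
    (h : IsPullback q r f g) (hf : Γ.fib f) : Γ.fib r := by
  obtain ⟨P', q', r', h', hr'⟩ := Γ.fib_pullback f g hf
  rw [← h.isoIsPullback_hom_snd _ _ h']
  exact Γ.fib_comp _ _ (Γ.fib_of_iso _ inferInstance) hr'

lemma trivialCovering_comp {A B Z : C} {f : A ⟶ B} {g : B ⟶ Z}
    (hf : Γ.TrivialCovering f) (hg : Γ.TrivialCovering g) : Γ.TrivialCovering (f ≫ g) :=
  ⟨Γ.fib_comp _ _ hf.1 hg.1, by simpa only [Functor.map_comp] using hf.2.paste_vert hg.2⟩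

section SliceAdjunction

variable [HasPullbacks C]

noncomputable def sliceH (B : C) : Γ.SliceFibX (Γ.I.obj B) ⥤ Γ.SliceFib B :=
  ObjectProperty.lift _
    (ObjectProperty.ι _ ⋙ Over.post Γ.H ⋙ Over.pullback (Γ.adj.unit.app B))
    (fun y => Γ.fib_of_isPullback (IsPullback.of_hasPullback _ _) (Γ.H_fib _ y.property))

noncomputable def sliceAdj (B : C) : Γ.restrictI B ⊣ Γ.sliceH B :=
  (Over.postAdjunctionLeft Γ.adj).restrictFullyFaithful (ObjectProperty.fullyFaithfulι _)
    (ObjectProperty.fullyFaithfulι _) (ObjectProperty.liftCompιIso _ _ _).symm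
    (ObjectProperty.liftCompιIso _ _ _).symm

lemma sliceAdj_counit_app_left (B : C) (y : Γ.SliceFibX (Γ.I.obj B)) :
    ((Γ.sliceAdj B).counit.app y).hom.left =
      Γ.I.map (pullback.fst (Γ.H.map y.obj.hom) (Γ.adj.unit.app B)) ≫
        Γ.adj.counit.app y.obj.left := by
  have h := congrArg CommaMorphism.left
    ((Over.postAdjunctionLeft Γ.adj).map_restrictFullyFaithful_counit_app
      (ObjectProperty.fullyFaithfulι _) (ObjectProperty.fullyFaithfulι _)
      (L := Γ.restrictI B) (R := Γ.sliceH B)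
      (ObjectProperty.liftCompιIso _ _ _).symm (ObjectProperty.liftCompιIso _ _ _).symm y)
  simp only [ObjectProperty.liftCompιIso, Iso.refl_symm, Iso.refl_inv, NatTrans.id_app] at h
  erw [CategoryTheory.Functor.map_id, Category.id_comp, Category.id_comp,
    Over.postAdjunctionLeft_counit_app_left] at h
  exact h

lemma isIso_sliceAdj_counit (hadm : Γ.Admissible) (B : C) : IsIso (Γ.sliceAdj B).counit := by
  obtain ⟨HB, adj, _, _⟩ := hadm B
  have hiso := Adjunction.rightAdjointUniq (Γ.sliceAdj B) adj
  have : (Γ.sliceH B).Full := Functor.Full.of_iso hiso.symm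
  have : (Γ.sliceH B).Faithful := Functor.Faithful.of_iso hiso.symm
  infer_instance

lemma isIso_map_comp_counit_of_isPullback (hadm : Γ.Admissible) {B : C} {Q : X}
    {w : Q ⟶ Γ.I.obj B} (hw : Γ.fibX w) {P : C} {a : P ⟶ Γ.H.obj Q} {b : P ⟶ B}
    (h : IsPullback a b (Γ.H.map w) (Γ.adj.unit.app B)) :
    IsIso (Γ.I.map a ≫ Γ.adj.counit.app Q) := by
  have := Γ.isIso_sliceAdj_counit hadm B
  have hε : IsIso (Γ.I.map (pullback.fst (Γ.H.map w) (Γ.adj.unit.app B)) ≫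
      Γ.adj.counit.app Q) := by
    have hε := Γ.sliceAdj_counit_app_left B ⟨Over.mk w, hw⟩
    dsimp only [Over.mk_hom, Over.mk_left] at hε
    rw [← hε]
    exact (ObjectProperty.ι _ ⋙ Over.forget _).map_isIso ((Γ.sliceAdj B).counit.app _)
  rw [← h.isoPullback_hom_fst, Γ.I.map_comp, Category.assoc]
  infer_instance

end SliceAdjunction

variable {P A Z B : C} {f : A ⟶ B} {g : Z ⟶ B} {q : P ⟶ A} {r : P ⟶ Z}

lemma isPullback_unit_comp_of_isPullback (hf : Γ.TrivialCovering f)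
    (hpb : IsPullback q r f g) :
    IsPullback (Γ.adj.unit.app P ≫ Γ.H.map (Γ.I.map q)) r (Γ.H.map (Γ.I.map f))
      (Γ.adj.unit.app Z ≫ Γ.H.map (Γ.I.map g)) := by
  have h := hpb.paste_horiz hf.2
  rwa [← Γ.adj.unit_naturality q, ← Γ.adj.unit_naturality g] at h

lemma isPullback_unit_comp_lift (hf : Γ.TrivialCovering f) (hg : Γ.TrivialCovering g)
    (hpb : IsPullback q r f g) {Q : X} {π₁ : Q ⟶ Γ.I.obj A} {π₂ : Q ⟶ Γ.I.obj Z}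
    (hQ : IsPullback π₁ π₂ (Γ.I.map f) (Γ.I.map g)) {θ : Γ.I.obj P ⟶ Q}
    (hθ₁ : θ ≫ π₁ = Γ.I.map q) (hθ₂ : θ ≫ π₂ = Γ.I.map r) :
    IsPullback (Γ.adj.unit.app P ≫ Γ.H.map θ) (r ≫ g) (Γ.H.map (π₂ ≫ Γ.I.map g))
      (Γ.adj.unit.app B) := by
  have : Γ.H.IsRightAdjoint := Γ.adj.isRightAdjoint
  have hPZ : IsPullback (Γ.adj.unit.app P ≫ Γ.H.map θ) r (Γ.H.map π₂) (Γ.adj.unit.app Z) := by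
    refine IsPullback.of_right ?_ ?_ (Γ.H.map_isPullback hQ)
    · rw [Category.assoc, ← Γ.H.map_comp, hθ₁]
      exact Γ.isPullback_unit_comp_of_isPullback hf hpb
    · rw [Category.assoc, ← Γ.H.map_comp, hθ₂]
      exact Γ.adj.unit_naturality r
  rw [Γ.H.map_comp]
  exact hPZ.paste_vert hg.2

lemma map_isPullback [HasPullbacks C] (hadm : Γ.Admissible) (hf : Γ.TrivialCovering f)
    (hg : Γ.TrivialCovering g) (hpb : IsPullback q r f g) :
    IsPullback (Γ.I.map q) (Γ.I.map r) (Γ.I.map f) (Γ.I.map g) := by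
  obtain ⟨Q, π₁, π₂, hQ, hπ₂⟩ := Γ.fibX_pullback (Γ.I.map f) (Γ.I.map g) (Γ.I_fib f hf.1)
  let θ := hQ.lift (Γ.I.map q) (Γ.I.map r) (by rw [← Γ.I.map_comp, ← Γ.I.map_comp, hpb.w])
  have hθ : Γ.I.map (Γ.adj.unit.app P ≫ Γ.H.map θ) ≫ Γ.adj.counit.app Q = θ := by simp
  have : IsIso θ := hθ ▸ Γ.isIso_map_comp_counit_of_isPullback hadm
    (Γ.fibX_comp _ _ hπ₂ (Γ.I_fib g hg.1))
    (Γ.isPullback_unit_comp_lift hf hg hpb hQ (hQ.lift_fst _ _ _) (hQ.lift_snd _ _ _))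
  exact hQ.of_iso' (asIso θ) (Iso.refl _) (Iso.refl _) (Iso.refl _)
    (by simp [θ]) (by simp [θ]) (by simp) (by simp)

lemma trivialCovering_of_isPullback [HasPullbacks C] (hadm : Γ.Admissible)
    (hf : Γ.TrivialCovering f) (hg : Γ.TrivialCovering g) (hpb : IsPullback q r f g) :
    Γ.TrivialCovering r := by
  have : Γ.H.IsRightAdjoint := Γ.adj.isRightAdjoint
  exact ⟨Γ.fib_of_isPullback hpb hf.1, (Γ.isPullback_unit_comp_of_isPullback hf hpb).of_right
    (Γ.adj.unit_naturality r) (Γ.H.map_isPullback (Γ.map_isPullback hadm hf hg hpb))⟩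

lemma map_isPullback₃ [HasPullbacks C] (hadm : Γ.Admissible) {R : InternalCat C}
    (hd : Γ.TrivialCovering R.d) (hc : Γ.TrivialCovering R.c) :
    IsPullback (Γ.I.map R.t₁) (Γ.I.map R.t₂) (Γ.I.map (R.p₂ ≫ R.c)) (Γ.I.map R.d) :=
  Γ.map_isPullback hadm
    (Γ.trivialCovering_comp (Γ.trivialCovering_of_isPullback hadm hc hd R.isPullback) hc)
    hd R.isPullback₃

end GaloisStructure

/-- Lemma 4.1: `I` preserves internal categories, internal functors
and internal natural transformations when source and target morphisms are trivial
coverings.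
Let `Γ` be an admissible Galois structure on a finitely complete category `C`, let `R`
and `S` be internal categories in `C` whose source and target morphisms are trivial
coverings, let `f, g : R ⟶ S` be internal functors and `μ` an internal natural
transformation from `f` to `g`.  Then `I(R)` and `I(S)` carry internal category
structures in `X` with all structure morphisms the `I`-images of those of `R` and `S`,
`I(f)` and `I(g)` are internal functors `I(R) ⟶ I(S)`, and `I(μ)` is an internal
natural transformation from `I(f)` to `I(g)`; in particular, if `f` and `g` are
naturally isomorphic then so are `I(f)` and `I(g)`. -/
theorem I_preserves_internal_structures
    {X : Type u₂} [Category.{v₂} X] [HasFiniteLimits C]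
    (Γ : GaloisStructure C X) (hadm : Γ.Admissible)
    (R S : InternalCat C)
    (hRd : Γ.TrivialCovering R.d) (hRc : Γ.TrivialCovering R.c)
    (hSd : Γ.TrivialCovering S.d) (hSc : Γ.TrivialCovering S.c)
    (f g : InternalFunctor R S) (μ : InternalNatTrans f g) :
    ∃ (R' S' : InternalCat X) (f' g' : InternalFunctor R' S')
      (μ' : InternalNatTrans f' g'),
      R'.base = Γ.I.obj R.base ∧ R'.arr = Γ.I.obj R.arr ∧ R'.pairs = Γ.I.obj R.pairs ∧
      HEq R'.d (Γ.I.map R.d) ∧ HEq R'.c (Γ.I.map R.c) ∧ HEq R'.e (Γ.I.map R.e) ∧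
      HEq R'.p₁ (Γ.I.map R.p₁) ∧ HEq R'.p₂ (Γ.I.map R.p₂) ∧ HEq R'.m (Γ.I.map R.m) ∧
      S'.base = Γ.I.obj S.base ∧ S'.arr = Γ.I.obj S.arr ∧ S'.pairs = Γ.I.obj S.pairs ∧
      HEq S'.d (Γ.I.map S.d) ∧ HEq S'.c (Γ.I.map S.c) ∧ HEq S'.e (Γ.I.map S.e) ∧
      HEq S'.p₁ (Γ.I.map S.p₁) ∧ HEq S'.p₂ (Γ.I.map S.p₂) ∧ HEq S'.m (Γ.I.map S.m) ∧
      HEq f'.f₀ (Γ.I.map f.f₀) ∧ HEq f'.f₁ (Γ.I.map f.f₁) ∧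
      HEq g'.f₀ (Γ.I.map g.f₀) ∧ HEq g'.f₁ (Γ.I.map g.f₁) ∧
      HEq μ'.μ (Γ.I.map μ.μ) ∧
      (μ.IsNatIso → μ'.IsNatIso) := by
  have hR := Γ.map_isPullback hadm hRc hRd R.isPullback
  have hR₃ := Γ.map_isPullback₃ hadm hRd hRc
  have hS := Γ.map_isPullback hadm hSc hSd S.isPullback
  have hS₃ := Γ.map_isPullback₃ hadm hSd hSc
  exact ⟨R.map Γ.I hR hR₃, S.map Γ.I hS hS₃, f.map Γ.I hR hR₃ hS hS₃, g.map Γ.I hR hR₃ hS hS₃,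
    μ.map Γ.I hR hR₃ hS hS₃, rfl, rfl, rfl, .rfl, .rfl, .rfl, .rfl, .rfl, .rfl,
    rfl, rfl, rfl, .rfl, .rfl, .rfl, .rfl, .rfl, .rfl, .rfl, .rfl, .rfl, .rfl, .rfl,
    fun hμ => hμ.map Γ.I hR hR₃ hS hS₃⟩

end GaloisPaper
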